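/- In the Min-Set-Cover reduction to Two-Stage Selection: given universe U of size m' and collection A = {A_1,…,A_m} of subsets of U covering U, construct items e_A (A ∈ A) with first-stage cost 1, items u_1,…,u_m with first-stage cost M = |U|·|A|, and for each i ∈ U a scenario S_i under which c^{S_i}_{e_A} = M if i ∈ A and 0 otherwise, and exactly r_i of the u-items have cost 0 (the rest M), where r_i = |{A ∈ A : i ∈ A}|; set p = m + 1. Then for every k, there exists a cover D ⊆ A with |D| ≤ k if and only if there exists a first-stage solution X with max_{i∈U} f₁(X, S_i) ≤ k. -/

import Mathlib

/-!
A cover `D` is simulated by the first stage `X = {e_A : A ∈ D}`, of cost `|D|`. Under the scenario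
of `i` exactly `m` items are free: the `e_A` with `i ∉ A` and the first `r_i` items `u`. Writing
`T_i` for the sets containing `i`, the first stage takes `|D|` of the `m + 1` slots but only
`|D \ T_i|` of the free items, so the remaining slots can all be filled for free exactly when `D`
meets `T_i`; otherwise the second stage costs at least `M`. Conversely, a first stage of cost
`k < m ≤ M` contains no `u`-item, so it is such an `X` with `|D| ≤ k`, and staying below `M` in
every scenario forces `D` to be a cover.
-/

open Finset

/-- Second-stage completion cost. -/
noncomputable def complMin {ι : Type*} [Fintype ι] [DecidableEq ι]
    (c : ι → ℝ) (X : Finset ι) (p : ℕ) : ℝ :=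
  sInf {v : ℝ | ∃ Y ⊆ Finset.univ \ X, Y.card = p - X.card ∧ v = ∑ e ∈ Y, c e}

/-- The two-stage cost `f₁(X,S)`. -/
noncomputable def f1 {ι : Type*} [Fintype ι] [DecidableEq ι]
    (C c : ι → ℝ) (X : Finset ι) (p : ℕ) : ℝ :=
  ∑ e ∈ X, C e + complMin c X p

section complMin

variable {ι : Type*} [Fintype ι] [DecidableEq ι] {c : ι → ℝ} {X : Finset ι} {p : ℕ}

lemma complMin_nonneg (hc : ∀ e, 0 ≤ c e) : 0 ≤ complMin c X p :=
  Real.sInf_nonneg <| by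
    rintro v ⟨Y, -, -, rfl⟩
    exact sum_nonneg fun e _ => hc e

lemma complMin_le_sum (hc : ∀ e, 0 ≤ c e) {Y : Finset ι} (hY : Y ⊆ univ \ X)
    (hcard : #Y = p - #X) : complMin c X p ≤ ∑ e ∈ Y, c e := by
  refine csInf_le ⟨0, ?_⟩ ⟨Y, hY, hcard, rfl⟩
  rintro v ⟨Y', -, -, rfl⟩
  exact sum_nonneg fun e _ => hc e

lemma le_complMin {b : ℝ} (hfeas : p - #X ≤ #(univ \ X))
    (hb : ∀ Y ⊆ univ \ X, #Y = p - #X → b ≤ ∑ e ∈ Y, c e) : b ≤ complMin c X p := by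
  obtain ⟨Y, hY, hcard⟩ := exists_subset_card_eq hfeas
  refine le_csInf ⟨_, Y, hY, hcard, rfl⟩ ?_
  rintro v ⟨Y, hY, hcard, rfl⟩
  exact hb Y hY hcard

lemma complMin_eq_zero_of_le_card_zeros (hc : ∀ e, 0 ≤ c e)
    (h : p - #X ≤ #(({e | c e = 0} : Finset ι) \ X)) : complMin c X p = 0 := by
  obtain ⟨Y, hY, hcard⟩ := exists_subset_card_eq h
  have hYX : Y ⊆ univ \ X := hY.trans (sdiff_subset_sdiff (subset_univ _) le_rfl)
  have hsum : ∑ e ∈ Y, c e = 0 := sum_eq_zero fun e he => by simpa using (mem_sdiff.1 (hY he)).1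
  exact le_antisymm (hsum ▸ complMin_le_sum hc hYX hcard) (complMin_nonneg hc)

lemma le_complMin_of_card_zeros_lt {M : ℝ} (hM : 0 ≤ M) (hc : ∀ e, c e = 0 ∨ M ≤ c e)
    (hfeas : p - #X ≤ #(univ \ X)) (hzeros : #(({e | c e = 0} : Finset ι) \ X) < p - #X) :
    M ≤ complMin c X p := by
  have hc₀ : ∀ e, 0 ≤ c e := fun e => (hc e).elim ge_of_eq hM.trans
  refine le_complMin hfeas fun Y hY hcard => ?_
  obtain ⟨e, heY, hne⟩ : ∃ e ∈ Y, c e ≠ 0 := by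
    by_contra! hY₀
    refine hzeros.not_ge (hcard ▸ card_le_card fun e he => ?_)
    simpa [hY₀ e he] using (mem_sdiff.1 (hY he)).2
  exact ((hc e).resolve_left hne).trans (single_le_sum (fun e _ => hc₀ e) heY)

end complMin

lemma sum_sumElim_const {α β R : Type*} [Semiring R] (X : Finset (α ⊕ β)) (a b : R) :
    ∑ e ∈ X, Sum.elim (fun _ => a) (fun _ => b) e = #X.toLeft * a + #X.toRight * b := by
  simp [sum_sum_eq_sum_toLeft_add_sum_toRight]

lemma exists_eq_disjSum_empty_of_card_add_mul_le {α β : Type*} {X : Finset (α ⊕ β)}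
    {M k : ℝ} (hM : 0 ≤ M) (hX : #X.toLeft + #X.toRight * M ≤ k) (hk : k < M) :
    ∃ D : Finset α, X = D.disjSum ∅ ∧ (#D : ℝ) ≤ k := by
  have hright : X.toRight = ∅ := by
    by_contra hne
    have : M ≤ #X.toRight * M :=
      le_mul_of_one_le_left hM (by exact_mod_cast card_pos.2 (nonempty_iff_ne_empty.2 hne))
    linarith [(Nat.cast_nonneg (α := ℝ) #X.toLeft)]
  refine ⟨X.toLeft, by rw [← hright, toLeft_disjSum_toRight], ?_⟩
  simpa [hright] using hX

lemma card_compl_sdiff_add_card {α : Type*} [Fintype α] [DecidableEq α] (D T : Finset α) :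
    #(Tᶜ \ D) + #T + #D = Fintype.card α + #(D ∩ T) := by
  have hcompl : Tᶜ \ D = (T ∪ D)ᶜ := by ext; simp [and_comm]
  have := card_union_add_card_inter T D
  have := card_le_univ (T ∪ D)
  rw [hcompl, card_compl, inter_comm]
  omega

section scenario

variable {m : ℕ} {M : ℝ}

/-- The costs under the scenario of an element lying exactly in the sets `A_j`, `j ∈ T`;
`Sum.inl j` is the item `e_{A_j}` and `Sum.inr j` the item `u_j`. -/
def scenarioCost (M : ℝ) (T : Finset (Fin m)) : Fin m ⊕ Fin m → ℝ :=
  Sum.elim (fun j => if j ∈ T then M else 0) (fun j => if (j : ℕ) < #T then 0 else M)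

lemma scenarioCost_eq_zero_or (T : Finset (Fin m)) (e : Fin m ⊕ Fin m) :
    scenarioCost M T e = 0 ∨ M ≤ scenarioCost M T e := by
  rcases e with j | j <;> simp only [scenarioCost, Sum.elim_inl, Sum.elim_inr] <;> split_ifs <;>
    simp

lemma scenarioCost_nonneg (hM : 0 ≤ M) (T : Finset (Fin m)) (e : Fin m ⊕ Fin m) :
    0 ≤ scenarioCost M T e :=
  (scenarioCost_eq_zero_or T e).elim ge_of_eq hM.trans

lemma card_zeros_scenarioCost_sdiff (hM : M ≠ 0) (D T : Finset (Fin m)) :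
    #(({e | scenarioCost M T e = 0} : Finset _) \ D.disjSum ∅) + #D = m + #(D ∩ T) := by
  have hzeros : ({e | scenarioCost M T e = 0} : Finset _) \ D.disjSum ∅ =
      (Tᶜ \ D).disjSum {j : Fin m | (j : ℕ) < #T} := by
    ext (j | j) <;> simp only [mem_sdiff, mem_filter, mem_univ, true_and] <;>
      simp [scenarioCost, hM, and_comm]
  have hT : #T ≤ m := (card_le_univ T).trans_eq (Fintype.card_fin m)
  have := card_compl_sdiff_add_card D T
  rw [hzeros, card_disjSum, Fin.card_filter_val_lt, min_eq_right hT]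
  simp only [Fintype.card_fin] at this
  omega

lemma complMin_scenarioCost_eq_zero (hM : 0 < M) {D T : Finset (Fin m)}
    (hDT : (D ∩ T).Nonempty) : complMin (scenarioCost M T) (D.disjSum ∅) (m + 1) = 0 := by
  refine complMin_eq_zero_of_le_card_zeros (scenarioCost_nonneg hM.le T) ?_
  have := card_zeros_scenarioCost_sdiff hM.ne' D T
  have := hDT.card_pos
  rw [card_disjSum, card_empty]
  omega

lemma le_complMin_scenarioCost (hM : 0 < M) {D T : Finset (Fin m)} (hD : #D < m)
    (hDT : Disjoint D T) : M ≤ complMin (scenarioCost M T) (D.disjSum ∅) (m + 1) := by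
  refine le_complMin_of_card_zeros_lt hM.le (scenarioCost_eq_zero_or T) ?_ ?_
  · simp [card_univ_sdiff]
    omega
  · have := card_zeros_scenarioCost_sdiff hM.ne' D T
    rw [disjoint_iff_inter_eq_empty.1 hDT, card_empty] at this
    rw [card_disjSum, card_empty]
    omega

end scenario

theorem set_cover_two_stage_reduction_general (U : Type*) [Fintype U] [DecidableEq U]
    [Nonempty U] (m : ℕ) (A : Fin m → Finset U)
    (hcover : ∀ i : U, ∃ j, i ∈ A j)
    (M : ℝ) (hM : M = (Fintype.card U) * m)
    (C : (Fin m ⊕ Fin m) → ℝ) (hC : C = Sum.elim (fun _ => 1) (fun _ => M))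
    (c : U → (Fin m ⊕ Fin m) → ℝ)
    (hc : c = fun i => Sum.elim (fun j => if i ∈ A j then M else 0)
      (fun j : Fin m => if (j : ℕ) < (Finset.univ.filter (fun j' => i ∈ A j')).card
        then 0 else M))
    (k : ℕ) :
    (∃ D : Finset (Fin m), (∀ i : U, ∃ j ∈ D, i ∈ A j) ∧ D.card ≤ k) ↔
      (∃ X : Finset (Fin m ⊕ Fin m), X.card ≤ m + 1 ∧
        ∀ i : U, f1 C (c i) X (m + 1) ≤ (k : ℝ)) := by
  subst hC hc
  have hcost : ∀ i : U, (Sum.elim (fun j => if i ∈ A j then M else 0) fun j : Fin m =>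
      if (j : ℕ) < #{j' | i ∈ A j'} then 0 else M) = scenarioCost M {j | i ∈ A j} := by
    intro i
    ext (j | j) <;> simp [scenarioCost]
  have hmM : (m : ℝ) ≤ M := by
    rw [hM]
    exact le_mul_of_one_le_left (Nat.cast_nonneg m) (by exact_mod_cast Fintype.card_pos)
  have hMpos : 0 < m → 0 < M := fun hm => (Nat.cast_pos.2 hm).trans_le hmM
  simp only [f1, hcost, sum_sumElim_const, mul_one]
  constructor
  · rintro ⟨D, hDcov, hDk⟩
    refine ⟨D.disjSum ∅, ?_, fun i => ?_⟩
    · simpa using (card_le_univ D).trans (by simp)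
    obtain ⟨j, hjD, hij⟩ := hDcov i
    have hmeet : (D ∩ ({j | i ∈ A j} : Finset _)).Nonempty :=
      ⟨j, mem_inter.2 ⟨hjD, by simpa using hij⟩⟩
    rw [complMin_scenarioCost_eq_zero (hMpos j.pos) hmeet, toLeft_disjSum, toRight_disjSum,
      card_empty]
    simpa using hDk
  · rintro ⟨X, -, hX⟩
    by_cases hkm : m ≤ k
    · exact ⟨univ, fun i => (hcover i).imp fun j hj => ⟨mem_univ j, hj⟩,
        by simpa using hkm⟩
    have hM₀ : 0 < M := hMpos (by omega)
    have hkM : (k : ℝ) < M := (Nat.cast_lt.2 (not_le.1 hkm)).trans_le hmM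
    obtain ⟨i₀⟩ := ‹Nonempty U›
    have hfirst := (le_add_of_nonneg_right
      (complMin_nonneg (scenarioCost_nonneg hM₀.le _))).trans (hX i₀)
    obtain ⟨D, rfl, hDk⟩ := exists_eq_disjSum_empty_of_card_add_mul_le hM₀.le hfirst hkM
    simp only [toLeft_disjSum, toRight_disjSum, card_empty, Nat.cast_zero, zero_mul, add_zero]
      at hX
    replace hDk : #D ≤ k := by exact_mod_cast hDk
    refine ⟨D, fun i => ?_, hDk⟩
    by_contra! hmiss
    have := le_complMin_scenarioCost hM₀ (by omega) (T := {j | i ∈ A j})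
      (disjoint_left.2 fun j hjD hjT => hmiss j hjD (by simpa using hjT))
    linarith [hX i, (Nat.cast_nonneg (α := ℝ) #D)]

theorem set_cover_two_stage_reduction (U : Type*) [Fintype U] [DecidableEq U]
    [Nonempty U] (m : ℕ) (hm : 1 ≤ m) (A : Fin m → Finset U)
    (hcover : ∀ i : U, ∃ j, i ∈ A j)
    (M : ℝ) (hM : M = (Fintype.card U) * m)
    (C : (Fin m ⊕ Fin m) → ℝ) (hC : C = Sum.elim (fun _ => 1) (fun _ => M))
    (c : U → (Fin m ⊕ Fin m) → ℝ)
    (hc : c = fun i => Sum.elim (fun j => if i ∈ A j then M else 0)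
      (fun j : Fin m => if (j : ℕ) < (Finset.univ.filter (fun j' => i ∈ A j')).card
        then 0 else M))
    (k : ℕ) :
    (∃ D : Finset (Fin m), (∀ i : U, ∃ j ∈ D, i ∈ A j) ∧ D.card ≤ k) ↔
      (∃ X : Finset (Fin m ⊕ Fin m), X.card ≤ m + 1 ∧
        ∀ i : U, f1 C (c i) X (m + 1) ≤ (k : ℝ)) :=
  set_cover_two_stage_reduction_general U m A hcover M hM C hC c hc k
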